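/- Suppose w_{t+1} - η_t ũ_{t+1} = w_t - η_t(g̃_t + ũ_t) for all t, where g̃_t = β g̃_{t-1} + ∇f(w_t; I_t) with β ∈ [0,1). Define z_t = w_t + ρ_{t-1} g̃_{t-1} - η_t ũ_t, where the sequence ρ_t satisfies β ρ_t = β η_t + ρ_{t-1}. Then z_{t+1} = z_t - (η_t - ρ_t) ∇f(w_t; I_t) + (η_t - η_{t+1}) ũ_{t+1}. -/

import Mathlib

/-- The recursion for `ρ` says `β (ρ - η) = r`: it turns the momentum part `ρ • (β • gp)` of
the shifted buffer, less the `η • β • gp` coming from the update, into `r • gp`. -/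
theorem shifted_iterate_step {R E : Type*} [CommRing R] [AddCommGroup E] [Module R E]
    {β η η' ρ r : R} {w w' u u' gp v : E}
    (hρ : β * ρ = β * η + r) (hupd : w' - η • u' = w - η • (β • gp + v + u)) :
    w' + ρ • (β • gp + v) - η' • u' = (w + r • gp - η • u) - (η - ρ) • v + (η - η') • u' := by
  linear_combination (norm := module) hupd + hρ • gp

/-- `gp t` denotes `g̃_{t-1}`, `rp t` denotes `ρ_{t-1}`,
`v t` denotes the stochastic gradient `∇f(w_t; I_t)`. -/
theorem mdsgd_transformation_equation_general {n : ℕ}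
    (β : ℝ)
    (w u g gp v z : ℕ → EuclideanSpace ℝ (Fin n))
    (η ρ rp : ℕ → ℝ)
    (hgp : ∀ t, gp (t + 1) = g t)
    (hg : ∀ t, g t = β • gp t + v t)
    (hrp : ∀ t, rp (t + 1) = ρ t)
    (hρ : ∀ t, β * ρ t = β * η t + rp t)
    (hupd : ∀ t, w (t + 1) - η t • u (t + 1) = w t - η t • (g t + u t))
    (hz : ∀ t, z t = w t + rp t • gp t - η t • u t) :
    ∀ t, z (t + 1) = z t - (η t - ρ t) • v t + (η t - η (t + 1)) • u (t + 1) := by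
  intro t
  rw [hz, hz, hgp, hrp, hg]
  exact shifted_iterate_step (hρ t) (hg t ▸ hupd t)

/-- Lemma 1, transformation equation of M-DSGD with momentum.
`gp t` denotes `g̃_{t-1}` (so `gp 0 = g̃_{-1} = 0`), `rp t` denotes `ρ_{t-1}`,
`v t` denotes the stochastic gradient `∇f(w_t; I_t)`. -/
theorem mdsgd_transformation_equation {n : ℕ}
    (β : ℝ) (hβ : 0 ≤ β) (hβ1 : β < 1)
    (w u g gp v z : ℕ → EuclideanSpace ℝ (Fin n))
    (η ρ rp : ℕ → ℝ)
    (hgp0 : gp 0 = 0) (hgp : ∀ t, gp (t + 1) = g t)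
    (hg : ∀ t, g t = β • gp t + v t)
    (hrp : ∀ t, rp (t + 1) = ρ t)
    (hρ : ∀ t, β * ρ t = β * η t + rp t)
    (hupd : ∀ t, w (t + 1) - η t • u (t + 1) = w t - η t • (g t + u t))
    (hz : ∀ t, z t = w t + rp t • gp t - η t • u t) :
    ∀ t, z (t + 1) = z t - (η t - ρ t) • v t + (η t - η (t + 1)) • u (t + 1) :=
  mdsgd_transformation_equation_general β w u g gp v z η ρ rp hgp hg hrp hρ hupd hz
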